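/- arXiv:2307.03983 — 2 statements merged into one kernel-verified Lean document; each statement's English description precedes it below -/
import Mathlib

section
/- The HSIC-PA overall outage probability decomposes as Pout = Q̃1 + Q̃2 + QM + QM+1, where Q̃1 = P( Ps·Z > τ(G), Z < (G/α0 − 1)·(P0·G + 1)/Ps, log2(1+τ(G)) < Rs, G > α0 ); Q̃2 = P( Ps·Z > τ(G), Z > (G/α0 − 1)·(P0·G + 1)/Ps, log2(1 + Ps·Z/(P0·G + 1)) < Rs, G > α0 ); QM = P( Ps·Z < τ(G), log2(1 + Ps·Z) < Rs, G > α0 ); and QM+1 = P( max{ log2(1 + Ps·Z/(P0·G + 1)), log2(1 + τ(G)) } < Rs, G < α0 ). -/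
open MeasureTheory ProbabilityTheory Real

/-- The interference threshold `τ(g) = max{0, g/α₀ − 1}`. -/
noncomputable def tau (α0 g : ℝ) : ℝ := max 0 (g / α0 - 1)

/-- The HSIC-PA achievable rate of a secondary user with channel gain `h`,
given the primary channel gain `g`. -/
noncomputable def rateHSIC (P0 Ps α0 h g : ℝ) : ℝ :=
  if Ps * h ≤ tau α0 g then Real.logb 2 (1 + Ps * h)
  else max (Real.logb 2 (1 + Ps * h / (P0 * g + 1))) (Real.logb 2 (1 + tau α0 g))

/-!
The rate is nondecreasing in the channel gain, so the best secondary user is the one with gain `Z`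
and outage is the event `rateHSIC P0 Ps α0 Z G < Rs`. For `G < α₀` the threshold `τ(G)` vanishes
and the rate is the maximum of the two logarithms (`Q_{M+1}`). For `G > α₀` one splits according
to whether `Ps·Z` lies below `τ(G)` (`Q_M`) or above it, and in the latter case according to
whether `Ps·Z/(P₀G+1)` lies below or above `τ(G)`, i.e. whether `Z` lies below or above
`τ(G)(P₀G+1)/Ps` (`Q̃₁`, `Q̃₂`). The boundary events `G = α₀`, `Ps·Z = τ(G)` and
`Z = τ(G)(P₀G+1)/Ps` are null: `G` has an atomless law, and every `Hₘ` has an atomless law and is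
independent of `G`, so it equals a given measurable function of `G` with probability zero.
-/

@[fun_prop]
theorem Real.measurable_logb (b : ℝ) : Measurable (logb b) := measurable_log.div_const _

theorem MonotoneOn.map_ciSup_of_finite {α β ι : Type*} [ConditionallyCompleteLinearOrder α]
    [ConditionallyCompleteLinearOrder β] [Finite ι] [Nonempty ι] {f : α → β} {s : Set α}
    (hf : MonotoneOn f s) {x : ι → α} (hx : ∀ i, x i ∈ s) :
    f (⨆ i, x i) = ⨆ i, f (x i) := by
  obtain ⟨j, hj⟩ := exists_eq_ciSup_of_finite (f := x)
  have hbdd : BddAbove (Set.range fun i ↦ f (x i)) := (Set.finite_range _).bddAbove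
  refine le_antisymm ?_ (ciSup_le fun i ↦ ?_)
  · rw [← hj]; exact le_ciSup hbdd j
  · exact hf (hx i) (hj ▸ hx j) (hj ▸ le_ciSup (Set.finite_range x).bddAbove i)

instance expMeasure.instNullSingletonClass (r : ℝ) : NullSingletonClass (expMeasure r) :=
  nullSingletonClass_withDensity _

theorem ProbabilityTheory.IndepFun.ae_ne_comp {Ω α β : Type*} [MeasurableSpace Ω]
    [MeasurableSpace α] [MeasurableSpace β] [MeasurableEq β] {μ : Measure Ω} [IsFiniteMeasure μ]
    {X : Ω → α} {Y : Ω → β} (hXY : IndepFun X Y μ) (hX : Measurable X) (hY : Measurable Y)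
    [NullSingletonClass (μ.map Y)] {f : α → β} (hf : Measurable f) :
    ∀ᵐ ω ∂μ, Y ω ≠ f (X ω) := by
  have hgraph : MeasurableSet {p : α × β | p.2 = f p.1} :=
    measurableSet_eq_fun measurable_snd (hf.comp measurable_fst)
  have hlaw : μ.map (fun ω ↦ (X ω, Y ω)) = (μ.map X).prod (μ.map Y) :=
    (indepFun_iff_map_prod_eq_prod_map_map hX.aemeasurable hY.aemeasurable).mp hXY
  simp only [ae_iff, ne_eq, not_not]
  change μ ((fun ω ↦ (X ω, Y ω)) ⁻¹' {p | p.2 = f p.1}) = 0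
  rw [← Measure.map_apply (hX.prodMk hY) hgraph, hlaw, Measure.prod_apply hgraph]
  simp [Set.preimage, measure_singleton]

theorem ProbabilityTheory.iIndepFun.ae_cons_ne_comp {Ω β : Type*} [MeasurableSpace Ω]
    [MeasurableSpace β] [MeasurableEq β] {μ : Measure Ω} [IsFiniteMeasure μ] {n : ℕ}
    {X : Ω → β} {Y : Fin n → Ω → β} (h : iIndepFun (Fin.cons X Y : Fin (n + 1) → Ω → β) μ)
    (hX : Measurable X) (hY : ∀ i, Measurable (Y i)) [∀ i, NullSingletonClass (μ.map (Y i))]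
    {f : β → β} (hf : Measurable f) :
    ∀ᵐ ω ∂μ, ∀ i, Y i ω ≠ f (X ω) := by
  refine ae_all_iff.2 fun i ↦ ?_
  have hXY : IndepFun X (Y i) μ := by simpa using h.indepFun (Fin.succ_ne_zero i).symm
  exact hXY.ae_ne_comp hX (hY i) hf

section Threshold

variable {α0 g : ℝ}

theorem tau_nonneg (α0 g : ℝ) : 0 ≤ tau α0 g := le_max_left _ _

theorem tau_eq_zero_of_le (hα0 : 0 < α0) (hg : g ≤ α0) : tau α0 g = 0 :=
  max_eq_left (by rw [sub_nonpos, div_le_one hα0]; exact hg)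

theorem tau_eq_of_le (hα0 : 0 < α0) (hg : α0 ≤ g) : tau α0 g = g / α0 - 1 :=
  max_eq_right (by rw [sub_nonneg, one_le_div hα0]; exact hg)

@[fun_prop]
theorem measurable_tau (α0 : ℝ) : Measurable (tau α0) := by unfold tau; fun_prop

end Threshold

section Rate

variable {P0 Ps α0 Rs g z : ℝ}

theorem logb_two_one_add_le {x y : ℝ} (hx : 0 ≤ x) (hxy : x ≤ y) :
    logb 2 (1 + x) ≤ logb 2 (1 + y) :=
  logb_le_logb_of_le one_lt_two (by linarith) (by linarith)

theorem rateHSIC_monotoneOn (hPs : 0 ≤ Ps) (hd : 0 < P0 * g + 1) :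
    MonotoneOn (fun h ↦ rateHSIC P0 Ps α0 h g) (Set.Ici 0) := by
  intro h₁ (h₁_nonneg : 0 ≤ h₁) h₂ _ h₁₂
  have hPh : Ps * h₁ ≤ Ps * h₂ := mul_le_mul_of_nonneg_left h₁₂ hPs
  have hPh₁ : 0 ≤ Ps * h₁ := mul_nonneg hPs h₁_nonneg
  simp only [rateHSIC]
  split_ifs with h₁_le h₂_le h₂_le
  · exact logb_two_one_add_le hPh₁ hPh
  · exact le_max_of_le_right (logb_two_one_add_le hPh₁ h₁_le)
  · exact absurd (hPh.trans h₂_le) h₁_le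
  · exact max_le_max (logb_two_one_add_le (by positivity) (by gcongr)) le_rfl

theorem rateHSIC_eq_max_of_tau_eq_zero (hPs : 0 ≤ Ps) (hz : 0 ≤ z) (hτ : tau α0 g = 0) :
    rateHSIC P0 Ps α0 z g =
      max (logb 2 (1 + Ps * z / (P0 * g + 1))) (logb 2 (1 + tau α0 g)) := by
  rw [rateHSIC, ite_eq_right_iff, hτ]
  intro hPz
  have hPz : Ps * z = 0 := le_antisymm hPz (mul_nonneg hPs hz)
  simp [hPz]

theorem rateHSIC_lt_iff_of_lt (hP0 : 0 ≤ P0) (hPs : 0 < Ps) (hα0 : 0 < α0) (hg : α0 < g)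
    (hz₁ : z ≠ (g / α0 - 1) / Ps) (hz₂ : z ≠ (g / α0 - 1) * (P0 * g + 1) / Ps) :
    rateHSIC P0 Ps α0 z g < Rs ↔
      (Ps * z > tau α0 g ∧ z < (g / α0 - 1) * (P0 * g + 1) / Ps ∧
        logb 2 (1 + tau α0 g) < Rs) ∨
      (Ps * z > tau α0 g ∧ z > (g / α0 - 1) * (P0 * g + 1) / Ps ∧
        logb 2 (1 + Ps * z / (P0 * g + 1)) < Rs) ∨
      (Ps * z < tau α0 g ∧ logb 2 (1 + Ps * z) < Rs) := by
  have hτ : tau α0 g = g / α0 - 1 := tau_eq_of_le hα0 hg.le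
  have hd : 0 < P0 * g + 1 := by nlinarith
  have hPz : Ps * z ≠ g / α0 - 1 := fun h ↦ hz₁ (by rw [← h]; field_simp)
  rw [rateHSIC, hτ]
  rcases hPz.lt_or_gt with hlt | hgt
  · simp [hlt.le, hlt, hlt.not_gt]
  have ht : 0 ≤ g / α0 - 1 := hτ ▸ tau_nonneg α0 g
  rw [if_neg hgt.not_ge]
  rcases hz₂.lt_or_gt with hb | hb
  · have : Ps * z / (P0 * g + 1) ≤ g / α0 - 1 := by
      rw [lt_div_iff₀ hPs] at hb
      rw [div_le_iff₀ hd]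
      linarith
    rw [max_eq_right (logb_two_one_add_le (div_nonneg (by linarith) hd.le) this)]
    simp [hgt, hb, hb.not_gt, hgt.not_gt]
  · have : g / α0 - 1 ≤ Ps * z / (P0 * g + 1) := by
      rw [div_lt_iff₀ hPs] at hb
      rw [le_div_iff₀ hd]
      linarith
    rw [max_eq_left (logb_two_one_add_le ht this)]
    simp [hgt, hb, hb.not_gt, hgt.not_gt]

theorem rateHSIC_lt_iff (hP0 : 0 ≤ P0) (hPs : 0 < Ps) (hα0 : 0 < α0) (hz : 0 ≤ z)
    (hg : g ≠ α0) (hz₁ : z ≠ (g / α0 - 1) / Ps) (hz₂ : z ≠ (g / α0 - 1) * (P0 * g + 1) / Ps) :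
    rateHSIC P0 Ps α0 z g < Rs ↔
      (((Ps * z > tau α0 g ∧ z < (g / α0 - 1) * (P0 * g + 1) / Ps ∧
          logb 2 (1 + tau α0 g) < Rs ∧ g > α0) ∨
        (Ps * z > tau α0 g ∧ z > (g / α0 - 1) * (P0 * g + 1) / Ps ∧
          logb 2 (1 + Ps * z / (P0 * g + 1)) < Rs ∧ g > α0)) ∨
        (Ps * z < tau α0 g ∧ logb 2 (1 + Ps * z) < Rs ∧ g > α0)) ∨
      (max (logb 2 (1 + Ps * z / (P0 * g + 1))) (logb 2 (1 + tau α0 g)) < Rs ∧ g < α0) := by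
  rcases hg.lt_or_gt with hlt | hgt
  · rw [rateHSIC_eq_max_of_tau_eq_zero hPs.le hz (tau_eq_zero_of_le hα0 hlt.le)]
    simp [hlt, hlt.not_gt]
  · rw [rateHSIC_lt_iff_of_lt hP0 hPs hα0 hgt hz₁ hz₂]
    simp [hgt, hgt.not_gt, or_assoc]

end Rate

theorem hsic_pa_outage_decomposition_general
    {Ω : Type*} [MeasurableSpace Ω] (μ : Measure Ω) [IsProbabilityMeasure μ]
    (M : ℕ) (hM : 1 ≤ M)
    (P0 Ps R0 Rs : ℝ) (hP0 : 0 < P0) (hPs : 0 < Ps) (hR0 : 0 < R0)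
    (ε0 α0 : ℝ)
    (hε0 : ε0 = 2 ^ R0 - 1)
    (hα0 : α0 = ε0 / P0)
    (G : Ω → ℝ) (H : Fin M → Ω → ℝ)
    (hGmeas : Measurable G) (hHmeas : ∀ m, Measurable (H m))
    (hGnn : ∀ ω, 0 ≤ G ω) (hHnn : ∀ m ω, 0 ≤ H m ω)
    (hGdist : Measure.map G μ = expMeasure 1)
    (hHdist : ∀ m, Measure.map (H m) μ = expMeasure 1)
    (hIndep : iIndepFun
      (Fin.cons G H : Fin (M + 1) → Ω → ℝ) μ)
    (Z : Ω → ℝ) (hZ : ∀ ω, Z ω = ⨆ m : Fin M, H m ω) :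
    μ {ω | (⨆ m : Fin M, rateHSIC P0 Ps α0 (H m ω) (G ω)) < Rs} =
      -- Q̃₁
      μ {ω | Ps * Z ω > tau α0 (G ω) ∧
             Z ω < (G ω / α0 - 1) * (P0 * G ω + 1) / Ps ∧
             Real.logb 2 (1 + tau α0 (G ω)) < Rs ∧ G ω > α0} +
      -- Q̃₂
      μ {ω | Ps * Z ω > tau α0 (G ω) ∧
             Z ω > (G ω / α0 - 1) * (P0 * G ω + 1) / Ps ∧
             Real.logb 2 (1 + Ps * Z ω / (P0 * G ω + 1)) < Rs ∧ G ω > α0} +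
      -- Q_M
      μ {ω | Ps * Z ω < tau α0 (G ω) ∧
             Real.logb 2 (1 + Ps * Z ω) < Rs ∧ G ω > α0} +
      -- Q_{M+1}
      μ {ω | max (Real.logb 2 (1 + Ps * Z ω / (P0 * G ω + 1)))
               (Real.logb 2 (1 + tau α0 (G ω))) < Rs ∧ G ω < α0} := by
  have : Nonempty (Fin M) := ⟨⟨0, hM⟩⟩
  have hα0_pos : 0 < α0 := by
    rw [hα0, hε0]; exact div_pos (sub_pos.2 (one_lt_rpow one_lt_two hR0)) hP0
  have hZ_mem (ω : Ω) : ∃ m, H m ω = Z ω := hZ ω ▸ exists_eq_ciSup_of_finite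
  have hZ_nonneg (ω : Ω) : 0 ≤ Z ω := (hZ_mem ω).elim fun m hm ↦ hm ▸ hHnn m ω
  have hZmeas : Measurable Z := funext hZ ▸ Measurable.iSup hHmeas
  have hZ_ne (f : ℝ → ℝ) (hf : Measurable f) : ∀ᵐ ω ∂μ, Z ω ≠ f (G ω) := by
    have (m : Fin M) : NullSingletonClass (μ.map (H m)) := by rw [hHdist m]; infer_instance
    filter_upwards [hIndep.ae_cons_ne_comp hGmeas hHmeas hf] with ω hω
    obtain ⟨m, hm⟩ := hZ_mem ω
    exact hm ▸ hω m
  have hG_ne : ∀ᵐ ω ∂μ, G ω ≠ α0 := by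
    have : NullSingletonClass (μ.map G) := by rw [hGdist]; infer_instance
    exact ae_of_ae_map hGmeas.aemeasurable (Measure.ae_ne _ α0)
  rw [← measure_union, ← measure_union, ← measure_union]
  · refine measure_congr (Filter.eventuallyEq_set.2 ?_)
    filter_upwards [hG_ne, hZ_ne (fun g ↦ (g / α0 - 1) / Ps) (by fun_prop),
      hZ_ne (fun g ↦ (g / α0 - 1) * (P0 * g + 1) / Ps) (by fun_prop)] with ω hg hz₁ hz₂
    have hsup : ⨆ m, rateHSIC P0 Ps α0 (H m ω) (G ω) = rateHSIC P0 Ps α0 (Z ω) (G ω) := by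
      rw [hZ, (rateHSIC_monotoneOn hPs.le (by nlinarith [hGnn ω])).map_ciSup_of_finite
        fun m ↦ hHnn m ω]
    simp only [Set.mem_ofPred_eq, Set.mem_union, hsup]
    exact rateHSIC_lt_iff hP0.le hPs hα0_pos (hZ_nonneg ω) hg hz₁ hz₂
  · exact Set.disjoint_left.2 fun ω h₁ h₂ ↦ by
      rcases h₁ with (⟨-, -, -, h⟩ | ⟨-, -, -, h⟩) | ⟨-, -, h⟩ <;> exact lt_asymm h h₂.2
  · exact Measurable.setOf (by fun_prop)
  · exact Set.disjoint_left.2 fun ω h₁ h₂ ↦ by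
      rcases h₁ with ⟨h, -⟩ | ⟨h, -⟩ <;> exact lt_asymm h h₂.1
  · exact Measurable.setOf (by fun_prop)
  · exact Set.disjoint_left.2 fun ω h₁ h₂ ↦ lt_asymm h₁.2.1 h₂.2.1
  · exact Measurable.setOf (by fun_prop)

/-- Lemma 1: the HSIC-PA overall outage probability decomposes as
`P_out = Q̃₁ + Q̃₂ + Q_M + Q_{M+1}`. -/
theorem hsic_pa_outage_decomposition
    {Ω : Type*} [MeasurableSpace Ω] (μ : Measure Ω) [IsProbabilityMeasure μ]
    (M : ℕ) (hM : 1 ≤ M)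
    (P0 Ps R0 Rs : ℝ) (hP0 : 0 < P0) (hPs : 0 < Ps) (hR0 : 0 < R0) (hRs : 0 < Rs)
    (ε0 εs α0 αs α1 : ℝ)
    (hε0 : ε0 = 2 ^ R0 - 1) (hεs : εs = 2 ^ Rs - 1)
    (hα0 : α0 = ε0 / P0) (hαs : αs = εs / Ps) (hα1 : α1 = (1 + εs) * α0)
    (G : Ω → ℝ) (H : Fin M → Ω → ℝ)
    (hGmeas : Measurable G) (hHmeas : ∀ m, Measurable (H m))
    (hGnn : ∀ ω, 0 ≤ G ω) (hHnn : ∀ m ω, 0 ≤ H m ω)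
    (hGdist : Measure.map G μ = expMeasure 1)
    (hHdist : ∀ m, Measure.map (H m) μ = expMeasure 1)
    (hIndep : iIndepFun
      (Fin.cons G H : Fin (M + 1) → Ω → ℝ) μ)
    (Z : Ω → ℝ) (hZ : ∀ ω, Z ω = ⨆ m : Fin M, H m ω) :
    μ {ω | (⨆ m : Fin M, rateHSIC P0 Ps α0 (H m ω) (G ω)) < Rs} =
      -- Q̃₁
      μ {ω | Ps * Z ω > tau α0 (G ω) ∧
             Z ω < (G ω / α0 - 1) * (P0 * G ω + 1) / Ps ∧
             Real.logb 2 (1 + tau α0 (G ω)) < Rs ∧ G ω > α0} +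
      -- Q̃₂
      μ {ω | Ps * Z ω > tau α0 (G ω) ∧
             Z ω > (G ω / α0 - 1) * (P0 * G ω + 1) / Ps ∧
             Real.logb 2 (1 + Ps * Z ω / (P0 * G ω + 1)) < Rs ∧ G ω > α0} +
      -- Q_M
      μ {ω | Ps * Z ω < tau α0 (G ω) ∧
             Real.logb 2 (1 + Ps * Z ω) < Rs ∧ G ω > α0} +
      -- Q_{M+1}
      μ {ω | max (Real.logb 2 (1 + Ps * Z ω / (P0 * G ω + 1)))
               (Real.logb 2 (1 + tau α0 (G ω))) < Rs ∧ G ω < α0} :=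
  hsic_pa_outage_decomposition_general μ M hM P0 Ps R0 Rs hP0 hPs hR0 ε0 α0 hε0 hα0 G H hGmeas
    hHmeas hGnn hHnn hGdist hHdist hIndep Z hZ
end

section
/- The HSIC-PA overall outage probability admits the integral representation Pout = ∫_0^{α1} e^{−x}·(1 − e^{−αs·(P0·x + 1)})^M dx + (1 − e^{−αs})^M·e^{−α1}. -/
open MeasureTheory ProbabilityTheory Real

/-!
A secondary user with gain `h` is in outage exactly when `h < φ(G)`, where
`φ(g) = αs (P0 g + 1)` for `g < α1` and `φ(g) = αs` otherwise (`hsicOutageThreshold`):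
for `g < α1` the threshold `τ(g)` stays below `εs`, so the rate `log2(1 + τ(g))` never reaches
`Rs` and outage is decided by the SINR `Ps h / (P0 g + 1)`; for `g ≥ α1` it does reach `Rs`, and
outage occurs only when `Ps h < εs`. Conditionally on `G` the gains
`H₁, …, H_M` are i.i.d. `Exp(1)`, hence `Pout = E[(1 - e^{-φ(G)})^M]`; splitting this
expectation at `G = α1`, where `φ` becomes constant, gives the two terms.
-/

open Set

theorem Finite.ciSup_lt_iff {ι α : Type*} [ConditionallyCompleteLinearOrder α] [Finite ι]
    [Nonempty ι] {f : ι → α} {a : α} : (⨆ i, f i) < a ↔ ∀ i, f i < a := by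
  refine ⟨fun h i => (le_ciSup f i).trans_lt h, fun h => ?_⟩
  obtain ⟨i, hi⟩ := exists_eq_ciSup_of_finite (f := f)
  rw [← hi]
  exact h i

theorem two_rpow_sub_one_pos {R : ℝ} (hR : 0 < R) : 0 < (2 : ℝ) ^ R - 1 :=
  sub_pos.2 (one_lt_rpow one_lt_two hR)

theorem logb_two_one_add_lt_iff {t R : ℝ} (ht : -1 < t) :
    logb 2 (1 + t) < R ↔ t < 2 ^ R - 1 := by
  rw [logb_lt_iff_lt_rpow one_lt_two (by linarith)]
  constructor <;> intro <;> linarith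

theorem tau_lt_iff {α0 ε g : ℝ} (hα0 : 0 < α0) (hε : 0 < ε) :
    tau α0 g < ε ↔ g < (1 + ε) * α0 := by
  rw [tau, max_lt_iff, sub_lt_iff_lt_add', div_lt_iff₀ hα0]
  simp [hε]

noncomputable def hsicOutageThreshold (P0 αs α1 g : ℝ) : ℝ :=
  if g < α1 then αs * (P0 * g + 1) else αs

theorem measurable_hsicOutageThreshold (P0 αs α1 : ℝ) :
    Measurable (hsicOutageThreshold P0 αs α1) :=
  Measurable.ite measurableSet_Iio (by fun_prop) measurable_const

theorem hsicOutageThreshold_pos {P0 αs α1 g : ℝ} (hP0 : 0 ≤ P0) (hαs : 0 < αs) (hg : 0 ≤ g) :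
    0 < hsicOutageThreshold P0 αs α1 g := by
  unfold hsicOutageThreshold
  split_ifs <;> positivity

theorem rateHSIC_lt_iff_s2 {P0 Ps Rs εs α0 αs α1 h g : ℝ} (hP0 : 0 < P0) (hPs : 0 < Ps)
    (hRs : 0 < Rs) (hα0 : 0 < α0) (hεs : εs = 2 ^ Rs - 1) (hαs : αs = εs / Ps)
    (hα1 : α1 = (1 + εs) * α0) (hh : 0 ≤ h) (hg : 0 ≤ g) :
    rateHSIC P0 Ps α0 h g < Rs ↔ h < hsicOutageThreshold P0 αs α1 g := by
  have hεs_pos : 0 < εs := hεs ▸ two_rpow_sub_one_pos hRs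
  have hPg : 0 < P0 * g + 1 := by positivity
  have hτ_nonneg : 0 ≤ tau α0 g := le_max_left _ _
  have hτ : tau α0 g < εs ↔ g < α1 := hα1 ▸ tau_lt_iff hα0 hεs_pos
  have hh_lt : h < αs ↔ Ps * h < εs := by rw [hαs, lt_div_iff₀ hPs, mul_comm]
  have hdirect : logb 2 (1 + Ps * h) < Rs ↔ h < αs := by
    rw [logb_two_one_add_lt_iff (by nlinarith), ← hεs, hh_lt]
  have hscaled : logb 2 (1 + Ps * h / (P0 * g + 1)) < Rs ↔ h < αs * (P0 * g + 1) := by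
    have : 0 ≤ Ps * h / (P0 * g + 1) := by positivity
    rw [logb_two_one_add_lt_iff (by linarith), ← hεs, div_lt_iff₀ hPg, hαs,
      div_mul_eq_mul_div, lt_div_iff₀ hPs, mul_comm h]
  have hαs_le : αs ≤ αs * (P0 * g + 1) :=
    le_mul_of_one_le_right (by rw [hαs]; positivity) (by nlinarith)
  unfold rateHSIC hsicOutageThreshold
  split_ifs with hbelow hgα1 hgα1
  · have : h < αs := hh_lt.2 (hbelow.trans_lt (hτ.2 hgα1))
    exact iff_of_true (hdirect.2 this) (this.trans_le hαs_le)
  · exact hdirect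
  · rw [max_lt_iff, hscaled, logb_two_one_add_lt_iff (by linarith), ← hεs, hτ]
    simp [hgα1]
  · refine iff_of_false (fun hlt => hgα1 (hτ.1 ?_)) fun hlt => hbelow ?_
    · rw [hεs, ← logb_two_one_add_lt_iff (by linarith)]
      exact (le_max_right _ _).trans_lt hlt
    · linarith [hh_lt.1 hlt, not_lt.1 (mt hτ.1 hgα1)]

theorem measure_forall_lt_comp_eq_lintegral {Ω : Type*} [MeasurableSpace Ω] {μ : Measure Ω}
    {n : ℕ} {G : Ω → ℝ} {H : Fin n → Ω → ℝ} (hG : Measurable G) (hH : ∀ m, Measurable (H m))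
    (hindep : iIndepFun (Fin.cons G H : Fin (n + 1) → Ω → ℝ) μ) {φ : ℝ → ℝ}
    (hφ : Measurable φ) :
    μ {ω | ∀ m, H m ω < φ (G ω)} = ∫⁻ g, ∏ m, μ.map (H m) (Iio (φ g)) ∂μ.map G := by
  have := hindep.isProbabilityMeasure
  set X : Fin (n + 1) → Ω → ℝ := Fin.cons G H
  have hX : ∀ i, Measurable (X i) := Fin.cases hG hH
  set T := {p : ℝ × (Fin n → ℝ) | ∀ m, p.2 m < φ p.1}
  have hT : MeasurableSet T := by
    simp only [T, ofPred_forall]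
    exact MeasurableSet.iInter fun m =>
      measurableSet_lt (by fun_prop) (hφ.comp measurable_fst)
  have hevent : {ω | ∀ m, H m ω < φ (G ω)} =
      (MeasurableEquiv.piFinSuccAbove (fun _ => ℝ) 0 ∘ fun ω i => X i ω) ⁻¹' T := by
    ext ω
    simp [T, X, MeasurableEquiv.piFinSuccAbove, Fin.tail]
  rw [hevent, ← Measure.map_apply (by fun_prop) hT, ← Measure.map_map (by fun_prop)
    (measurable_pi_lambda _ hX), hindep.map_fun_eq_pi_map fun i => (hX i).aemeasurable,
    (measurePreserving_piFinSuccAbove _ 0).map_eq, Measure.prod_apply hT]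
  congr with g
  have hslice : Prod.mk g ⁻¹' T = univ.pi fun _ => Iio (φ g) := by
    ext y
    simp [T]
  simp [hslice, X]

theorem expMeasure_Iio {r : ℝ} (hr : 0 < r) (t : ℝ) :
    expMeasure r (Iio t) = ENNReal.ofReal (if 0 ≤ t then 1 - exp (-(r * t)) else 0) := by
  rw [show expMeasure r = volume.withDensity (exponentialPDF r) from rfl,
    withDensity_apply _ measurableSet_Iio, setLIntegral_congr Iio_ae_eq_Iic,
    lintegral_exponentialPDF_eq_antiDeriv hr t]

theorem ae_nonneg_expMeasure {r : ℝ} (hr : 0 < r) : ∀ᵐ x ∂expMeasure r, 0 ≤ x := by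
  have hneg : expMeasure r (Iio 0) = 0 := by simpa using expMeasure_Iio hr 0
  rw [ae_iff]
  simp only [not_le]
  exact hneg

theorem integral_expMeasure {r : ℝ} (hr : 0 ≤ r) (f : ℝ → ℝ) :
    ∫ x, f x ∂expMeasure r = ∫ x in Ici 0, r * exp (-(r * x)) * f x := by
  rw [show expMeasure r = volume.withDensity (exponentialPDF r) from rfl,
    integral_withDensity_eq_integral_toReal_smul (f := exponentialPDF r)
      (measurable_exponentialPDFReal r).ennreal_ofReal
      (ae_of_all _ fun _ => ENNReal.ofReal_lt_top), ← integral_indicator measurableSet_Ici]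
  congr with x
  by_cases hx : 0 ≤ x <;> simp [exponentialPDF_eq, hx, indicator, mul_nonneg hr (exp_pos _).le]

theorem integral_expMeasure_one_eq_intervalIntegral_add {f : ℝ → ℝ} {a c C : ℝ} (ha : 0 ≤ a)
    (hf : Measurable f) (hbdd : ∀ x, 0 ≤ x → |f x| ≤ C) (hc : ∀ x, a ≤ x → f x = c) :
    ∫ x, f x ∂expMeasure 1 = (∫ x in 0..a, exp (-x) * f x) + c * exp (-a) := by
  have hint : IntegrableOn (fun x => exp (-x) * f x) (Ici 0) := by
    have hexp : IntegrableOn (fun x => exp (-x)) (Ici 0) := by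
      simpa [integrableOn_Ici_iff_integrableOn_Ioi] using exp_neg_integrableOn_Ioi 0 one_pos
    exact hexp.mul_bdd hf.aestronglyMeasurable.restrict
      ((ae_restrict_iff' measurableSet_Ici).2 (ae_of_all _ hbdd))
  simp only [integral_expMeasure zero_le_one, one_mul]
  rw [← Ico_union_Ici_eq_Ici ha,
    setIntegral_union ((Iio_disjoint_Ici le_rfl).mono_left Ico_subset_Iio_self) measurableSet_Ici
      (hint.mono_set Ico_subset_Ici_self) (hint.mono_set (Ici_subset_Ici.2 ha)),
    intervalIntegral.integral_of_le ha, integral_Ico_eq_integral_Ioo,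
    integral_Ioc_eq_integral_Ioo]
  congr 1
  rw [setIntegral_congr_fun measurableSet_Ici fun x hx => by rw [hc x hx, mul_comm],
    integral_const_mul, integral_Ici_eq_integral_Ioi, integral_exp_neg_Ioi]

theorem abs_one_sub_exp_neg_pow_le_one {t : ℝ} (ht : 0 ≤ t) (n : ℕ) :
    |(1 - exp (-t)) ^ n| ≤ 1 := by
  have hnonneg : 0 ≤ 1 - exp (-t) := by simpa using ht
  rw [abs_of_nonneg (pow_nonneg hnonneg n)]
  exact pow_le_one₀ hnonneg (by linarith [exp_pos (-t)])

theorem measureReal_forall_lt_comp_eq_integral_expMeasure {Ω : Type*} [MeasurableSpace Ω]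
    {μ : Measure Ω} {n : ℕ} {G : Ω → ℝ} {H : Fin n → Ω → ℝ} (hG : Measurable G)
    (hH : ∀ m, Measurable (H m)) (hGdist : μ.map G = expMeasure 1)
    (hHdist : ∀ m, μ.map (H m) = expMeasure 1)
    (hindep : iIndepFun (Fin.cons G H : Fin (n + 1) → Ω → ℝ) μ) {φ : ℝ → ℝ}
    (hφ : Measurable φ) (hφ_nonneg : ∀ g, 0 ≤ g → 0 ≤ φ g) :
    μ.real {ω | ∀ m, H m ω < φ (G ω)} = ∫ g, (1 - exp (-φ g)) ^ n ∂expMeasure 1 := by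
  have hcdf_nonneg : ∀ g, 0 ≤ g → 0 ≤ 1 - exp (-φ g) := fun g hg => by
    simpa using hφ_nonneg g hg
  rw [measureReal_def, measure_forall_lt_comp_eq_lintegral hG hH hindep hφ,
    integral_eq_lintegral_of_nonneg_ae
      ((ae_nonneg_expMeasure one_pos).mono fun g hg => pow_nonneg (hcdf_nonneg g hg) n)
      (by fun_prop)]
  simp only [hGdist, hHdist, Finset.prod_const, Finset.card_univ, Fintype.card_fin]
  congr 1
  refine lintegral_congr_ae ((ae_nonneg_expMeasure one_pos).mono fun g hg => ?_)
  dsimp only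
  rw [expMeasure_Iio one_pos, if_pos (hφ_nonneg g hg), one_mul,
    ENNReal.ofReal_pow (hcdf_nonneg g hg)]

theorem hsic_pa_outage_integral_form_general
    {Ω : Type*} [MeasurableSpace Ω] (μ : Measure Ω)
    (M : ℕ) (hM : 1 ≤ M)
    (P0 Ps R0 Rs : ℝ) (hP0 : 0 < P0) (hPs : 0 < Ps) (hR0 : 0 < R0) (hRs : 0 < Rs)
    (ε0 εs α0 αs α1 : ℝ)
    (hε0 : ε0 = 2 ^ R0 - 1) (hεs : εs = 2 ^ Rs - 1)
    (hα0 : α0 = ε0 / P0) (hαs : αs = εs / Ps) (hα1 : α1 = (1 + εs) * α0)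
    (G : Ω → ℝ) (H : Fin M → Ω → ℝ)
    (hGmeas : Measurable G) (hHmeas : ∀ m, Measurable (H m))
    (hGnn : ∀ ω, 0 ≤ G ω) (hHnn : ∀ m ω, 0 ≤ H m ω)
    (hGdist : Measure.map G μ = expMeasure 1)
    (hHdist : ∀ m, Measure.map (H m) μ = expMeasure 1)
    (hIndep : iIndepFun
      (Fin.cons G H : Fin (M + 1) → Ω → ℝ) μ)
    :
    (μ {ω | (⨆ m : Fin M, rateHSIC P0 Ps α0 (H m ω) (G ω)) < Rs}).toReal =
      (∫ x in (0 : ℝ)..α1,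
        Real.exp (-x) * (1 - Real.exp (-αs * (P0 * x + 1))) ^ M) +
      (1 - Real.exp (-αs)) ^ M * Real.exp (-α1) := by
  have : Nonempty (Fin M) := ⟨⟨0, hM⟩⟩
  have hεs_pos : 0 < εs := hεs ▸ two_rpow_sub_one_pos hRs
  have hα0_pos : 0 < α0 := hα0 ▸ div_pos (hε0 ▸ two_rpow_sub_one_pos hR0) hP0
  have hαs_pos : 0 < αs := hαs ▸ div_pos hεs_pos hPs
  have hα1_pos : 0 < α1 := hα1 ▸ by positivity
  set φ := hsicOutageThreshold P0 αs α1
  have hφ_meas : Measurable φ := measurable_hsicOutageThreshold P0 αs α1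
  have hφ_pos : ∀ g, 0 ≤ g → 0 < φ g := fun g => hsicOutageThreshold_pos hP0.le hαs_pos
  have houtage : {ω | (⨆ m, rateHSIC P0 Ps α0 (H m ω) (G ω)) < Rs} =
      {ω | ∀ m, H m ω < φ (G ω)} := by
    ext ω
    simp only [mem_ofPred_eq, Finite.ciSup_lt_iff]
    exact forall_congr' fun m =>
      rateHSIC_lt_iff_s2 hP0 hPs hRs hα0_pos hεs hαs hα1 (hHnn m ω) (hGnn ω)
  rw [← measureReal_def, houtage, measureReal_forall_lt_comp_eq_integral_expMeasure hGmeas hHmeas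
      hGdist hHdist hIndep hφ_meas fun g hg => (hφ_pos g hg).le,
    integral_expMeasure_one_eq_intervalIntegral_add hα1_pos.le (by fun_prop)
      (fun g hg => abs_one_sub_exp_neg_pow_le_one (hφ_pos g hg).le M)
      fun g hg => by rw [show φ g = αs from if_neg (not_lt.2 hg)],
    intervalIntegral.integral_of_le hα1_pos.le, intervalIntegral.integral_of_le hα1_pos.le,
    integral_Ioc_eq_integral_Ioo, integral_Ioc_eq_integral_Ioo]
  congr 1
  refine setIntegral_congr_fun measurableSet_Ioo fun g hg => ?_
  simp [φ, hsicOutageThreshold, hg.2]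

/-- integral representation of the HSIC-PA overall outage probability. -/
theorem hsic_pa_outage_integral_form
    {Ω : Type*} [MeasurableSpace Ω] (μ : Measure Ω) [IsProbabilityMeasure μ]
    (M : ℕ) (hM : 1 ≤ M)
    (P0 Ps R0 Rs : ℝ) (hP0 : 0 < P0) (hPs : 0 < Ps) (hR0 : 0 < R0) (hRs : 0 < Rs)
    (ε0 εs α0 αs α1 : ℝ)
    (hε0 : ε0 = 2 ^ R0 - 1) (hεs : εs = 2 ^ Rs - 1)
    (hα0 : α0 = ε0 / P0) (hαs : αs = εs / Ps) (hα1 : α1 = (1 + εs) * α0)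
    (G : Ω → ℝ) (H : Fin M → Ω → ℝ)
    (hGmeas : Measurable G) (hHmeas : ∀ m, Measurable (H m))
    (hGnn : ∀ ω, 0 ≤ G ω) (hHnn : ∀ m ω, 0 ≤ H m ω)
    (hGdist : Measure.map G μ = expMeasure 1)
    (hHdist : ∀ m, Measure.map (H m) μ = expMeasure 1)
    (hIndep : iIndepFun
      (Fin.cons G H : Fin (M + 1) → Ω → ℝ) μ)
    (Z : Ω → ℝ) (hZ : ∀ ω, Z ω = ⨆ m : Fin M, H m ω)
    :
    (μ {ω | (⨆ m : Fin M, rateHSIC P0 Ps α0 (H m ω) (G ω)) < Rs}).toReal =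
      (∫ x in (0 : ℝ)..α1,
        Real.exp (-x) * (1 - Real.exp (-αs * (P0 * x + 1))) ^ M) +
      (1 - Real.exp (-αs)) ^ M * Real.exp (-α1) :=
  hsic_pa_outage_integral_form_general μ M hM P0 Ps R0 Rs hP0 hPs hR0 hRs ε0 εs α0 αs α1 hε0 hεs hα0
    hαs hα1 G H hGmeas hHmeas hGnn hHnn hGdist hHdist hIndep
end
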